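/- arXiv:2604.01510 — 2 statements merged into one kernel-verified Lean document; each statement's English description precedes it below -/
import Mathlib

section
/- Let A be an M×N partial sign matrix and let d ≥ 1. If the sign-rank of A is at most d, then there exists a continuous map f from the crosspolytope realization |S(A)| to ℝ^d such that ‖f(x)‖ = 1 for all x ∈ |S(A)| and f(−x) = −f(x) whenever x and −x both lie in |S(A)|; i.e., there is a ℤ₂-equivariant continuous map |S(A)| → S^{d−1}, so ind_{ℤ₂}(S(A)) ≤ srank(A) − 1. -/
open scoped RealInnerProductSpace Pointwise

/-!
A sign-rank realization `u, v` in `ℝ^d` gives the linear map `V x = ∑ j, x j • v j`. The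
functional `⟪u i, V ·⟫` is positive on every vertex `± e_j` of the simplex of row `i`, hence on
the whole simplex, so `V` does not vanish on `|S(A)|`. As `V` is odd, `V / ‖V‖` is the required
equivariant map to the sphere.
-/

/-- The realized simplex of row `i` of the partial sign matrix `A`:
the convex hull of `{e_j : A i j = 1} ∪ {-e_j : A i j = -1}`. -/
noncomputable def rowSimplex {M N : ℕ} (A : Fin M → Fin N → ℤ) (i : Fin M) :
    Set (Fin N → ℝ) :=
  convexHull ℝ
    ({x | ∃ j, A i j = 1 ∧ x = Pi.single j (1 : ℝ)} ∪
     {x | ∃ j, A i j = -1 ∧ x = -Pi.single j (1 : ℝ)})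

/-- The crosspolytope realization `|S(A)|` of the sign complex of `A`. -/
noncomputable def signComplexReal {M N : ℕ} (A : Fin M → Fin N → ℤ) :
    Set (Fin N → ℝ) :=
  ⋃ i, (rowSimplex A i ∪ -(rowSimplex A i))

lemma pos_of_mem_convexHull {E : Type*} [AddCommGroup E] [Module ℝ E] (φ : E →ₗ[ℝ] ℝ)
    {s : Set E} (hs : ∀ x ∈ s, 0 < φ x) {x : E} (hx : x ∈ convexHull ℝ s) : 0 < φ x :=
  convexHull_min hs (convex_halfSpace_gt φ.isLinear 0) hx

lemma pos_of_mem_rowSimplex {M N : ℕ} (A : Fin M → Fin N → ℤ) (i : Fin M)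
    (φ : (Fin N → ℝ) →ₗ[ℝ] ℝ)
    (hφ : ∀ j, A i j ≠ 0 → 0 < (A i j : ℝ) * φ (Pi.single j 1))
    {x : Fin N → ℝ} (hx : x ∈ rowSimplex A i) : 0 < φ x := by
  refine pos_of_mem_convexHull φ ?_ hx
  rintro y (⟨j, hj, rfl⟩ | ⟨j, hj, rfl⟩) <;> simpa [hj] using hφ j (by simp [hj])

lemma linearCombination_ne_zero_of_mem_signComplexReal {M N : ℕ} {E : Type*}
    [NormedAddCommGroup E] [InnerProductSpace ℝ E] (A : Fin M → Fin N → ℤ)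
    (u : Fin M → E) (v : Fin N → E) (huv : ∀ i j, A i j ≠ 0 → 0 < (A i j : ℝ) * ⟪u i, v j⟫)
    {x : Fin N → ℝ} (hx : x ∈ signComplexReal A) : Fintype.linearCombination ℝ v x ≠ 0 := by
  set V := Fintype.linearCombination ℝ v
  have hpos : ∀ i, ∀ y ∈ rowSimplex A i, 0 < ⟪u i, V y⟫ := fun i y hy =>
    pos_of_mem_rowSimplex A i ((innerₛₗ ℝ (u i)).comp V)
      (by simpa [V, Fintype.linearCombination_apply_single] using huv i) hy
  simp only [signComplexReal, Set.mem_iUnion, Set.mem_union, Set.mem_neg] at hx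
  intro h0
  obtain ⟨i, hx | hx⟩ := hx
  · simpa [h0] using hpos i x hx
  · simpa [h0] using hpos i (-x) hx

lemma exists_odd_sphere_map_of_ne_zero {X E : Type*} [TopologicalSpace X] [Neg X]
    [NormedAddCommGroup E] [NormedSpace ℝ E] {s : Set X} (f : X → E) (hf : ContinuousOn f s)
    (hf0 : ∀ x ∈ s, f x ≠ 0) (hodd : ∀ x, f (-x) = -f x) :
    ∃ g : X → E, ContinuousOn g s ∧ (∀ x ∈ s, ‖g x‖ = 1) ∧
      (∀ x, x ∈ s → -x ∈ s → g (-x) = -g x) := by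
  refine ⟨fun x => ‖f x‖⁻¹ • f x, ?_, fun x hx => ?_, fun x _ _ => ?_⟩
  · exact (hf.norm.inv₀ fun x hx => norm_ne_zero_iff.mpr (hf0 x hx)).smul hf
  · rw [norm_smul, norm_inv, norm_norm, inv_mul_cancel₀ (norm_ne_zero_iff.mpr (hf0 x hx))]
  · simp only [hodd, norm_neg, smul_neg]

theorem index_le_srank_general {M N : ℕ} (d : ℕ)
    (A : Fin M → Fin N → ℤ)
    (hrank : ∃ (u : Fin M → EuclideanSpace ℝ (Fin d))
        (v : Fin N → EuclideanSpace ℝ (Fin d)),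
      ∀ i j, A i j ≠ 0 → 0 < (A i j : ℝ) * ⟪u i, v j⟫) :
    ∃ f : (Fin N → ℝ) → EuclideanSpace ℝ (Fin d),
      ContinuousOn f (signComplexReal A) ∧
      (∀ x ∈ signComplexReal A, ‖f x‖ = 1) ∧
      (∀ x, x ∈ signComplexReal A → -x ∈ signComplexReal A → f (-x) = -f x) := by
  obtain ⟨u, v, huv⟩ := hrank
  set V := Fintype.linearCombination ℝ v
  exact exists_odd_sphere_map_of_ne_zero V
    (LinearMap.continuous_of_finiteDimensional V).continuousOn
    (fun x hx => linearCombination_ne_zero_of_mem_signComplexReal A u v huv hx) (map_neg V)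

/-- If the sign-rank of `A` is at most `d`, then there is a ℤ₂-equivariant
continuous map `|S(A)| → S^{d-1}`, i.e. `ind_{ℤ₂}(S(A)) ≤ srank(A) - 1`. -/
theorem index_le_srank {M N : ℕ} (d : ℕ) (hd : 1 ≤ d)
    (A : Fin M → Fin N → ℤ)
    (hA : ∀ i j, A i j = -1 ∨ A i j = 0 ∨ A i j = 1)
    (hrank : ∃ (u : Fin M → EuclideanSpace ℝ (Fin d))
        (v : Fin N → EuclideanSpace ℝ (Fin d)),
      ∀ i j, A i j ≠ 0 → 0 < (A i j : ℝ) * ⟪u i, v j⟫) :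
    ∃ f : (Fin N → ℝ) → EuclideanSpace ℝ (Fin d),
      ContinuousOn f (signComplexReal A) ∧
      (∀ x ∈ signComplexReal A, ‖f x‖ = 1) ∧
      (∀ x, x ∈ signComplexReal A → -x ∈ signComplexReal A → f (-x) = -f x) :=
  index_le_srank_general d A hrank
end

section
/- (Strong coindex bound for Gap Hamming Distance, explicit form.) Let n, k, t ∈ ℕ with k ≥ 5, t ≥ 2, 2k < n, and (k : ℝ) > t/2 + 2·√(t·log t) (natural logarithm). Then there exists a continuous map f from the unit sphere S^t (the set {x ∈ EuclideanSpace ℝ (Fin (t+1)) : ‖x‖ = 1}) into ℝ^({0,1}^n) such that f(x) ∈ |S(GHD_k^n)| and f(−x) = −f(x) for all x ∈ S^t. In particular coind_{ℤ₂}(S(GHD_k^n)) ≥ (1 − o_k(1))·2k. -/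
/-!
View `u ∈ S^t` as the coefficient vector of a nonzero polynomial of degree `≤ t` and let
`a j u` be its value at `j`, for `j < n`. Since such a polynomial has at most `t` roots,
compactness of the sphere gives `δ > 0` such that at most `t ≤ 2k` of the values `a j u` lie
in `(-δ, δ)`. For `v = a(u)/δ`, the sign vectors `y_τ = (v_j > τ)_j`, `τ ∈ [-1, 1)`, cut
`[-1, 1)` into intervals whose lengths `w_y(v)` are continuous in `v` and satisfy
`w_y(-v) = w_{¬y}(v)`, so `u ↦ ∑_y w_y (e_y - e_{¬y}) / 4` is continuous and odd. The `y_τ`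
all agree outside the at most `2k` coordinates with `|v_j| < 1` and form a chain on them, so
some `x` lies within Hamming distance `k` of every `y_τ`. Then each `(e_y - e_{¬y}) / 2` with
`w_y > 0` lies in `σ_x`, and the map is a convex combination of these points.
-/

open scoped Pointwise

/-- The realized simplex `σ_x` of the Gap Hamming Distance sign complex:
the convex hull of `{e_y : d_H(x,y) ≤ k} ∪ {-e_y : d_H(x,y) ≥ n - k}`. -/
noncomputable def ghdSimplex (n k : ℕ) (x : Fin n → Bool) :
    Set ((Fin n → Bool) → ℝ) :=
  convexHull ℝ
    ({v | ∃ y, hammingDist x y ≤ k ∧ v = Pi.single y (1 : ℝ)} ∪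
     {v | ∃ y, n - k ≤ hammingDist x y ∧ v = -Pi.single y (1 : ℝ)})

/-- The crosspolytope realization `|S(GHD_k^n)|`. -/
noncomputable def ghdRealization (n k : ℕ) : Set ((Fin n → Bool) → ℝ) :=
  ⋃ x, (ghdSimplex n k x ∪ -(ghdSimplex n k x))

open Finset MeasureTheory

theorem card_filter_sum_mul_pow_eq_zero_le {R ι : Type*} [CommRing R] [IsDomain R]
    [DecidableEq R] [Fintype ι] {t : ℕ} {u : Fin (t + 1) → R} (hu : u ≠ 0) {x : ι → R}
    (hx : Function.Injective x) :
    #{j | ∑ i, u i * x j ^ (i : ℕ) = 0} ≤ t := by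
  by_contra! h
  obtain ⟨e, he⟩ :=
    Function.Embedding.exists_of_card_le_finset (α := Fin (t + 1)) (by simpa using h)
  refine hu (Matrix.eq_zero_of_mulVec_eq_zero
    (Matrix.det_vandermonde_ne_zero_iff.2 (hx.comp e.injective)) (funext fun r => ?_))
  have := he (Set.mem_range_self r)
  simp only [coe_filter, mem_univ, true_and, Set.mem_ofPred_eq] at this
  simp only [Matrix.mulVec, dotProduct, Matrix.vandermonde_apply, Function.comp_apply,
    Pi.zero_apply]
  simpa only [mul_comm] using this

open Filter Topology in
theorem IsCompact.exists_pos_card_abs_lt_le {X ι : Type*} [TopologicalSpace X] [Fintype ι]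
    {K : Set X} (hK : IsCompact K) {a : ι → X → ℝ} (ha : ∀ j, Continuous (a j)) {t : ℕ}
    (hzero : ∀ u ∈ K, #{j | a j u = 0} ≤ t) :
    ∃ δ > 0, ∀ u ∈ K, #{j | |a j u| < δ} ≤ t := by
  have hlocal : ∀ u ∈ K, ∀ᶠ z : ℝ × X in 𝓝 (0, u), #{j | |a j z.2| < z.1} ≤ t := by
    intro u hu
    have hfar : ∀ᶠ z : ℝ × X in 𝓝 (0, u), ∀ j, a j u ≠ 0 → z.1 < |a j z.2| := by
      refine eventually_all.2 fun j => ?_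
      by_cases h : a j u = 0
      · simp [h]
      · have hc : Continuous fun z : ℝ × X => |a j z.2| - z.1 := by fun_prop
        filter_upwards [hc.continuousAt.eventually (lt_mem_nhds (a := 0) (by simpa using h))]
          with z hz _ using sub_pos.1 hz
    filter_upwards [hfar] with z hz
    refine (card_le_card fun j => ?_).trans (hzero u hu)
    simp only [mem_filter, mem_univ, true_and]
    exact fun hj => by_contra fun h => (hz j h).not_gt hj
  obtain ⟨δ, hδ, hpos⟩ := (((hK.eventually_forall_of_forall_eventually
    (P := fun δ u => #{j | |a j u| < δ} ≤ t) hlocal).filter_mono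
    nhdsWithin_le_nhds).and (self_mem_nhdsWithin (s := Set.Ioi (0 : ℝ)))).exists
  exact ⟨δ, hpos, hδ⟩

theorem exists_finset_card_eq_forall_notMem_le {ι α : Type*} [Fintype ι] [LinearOrder α]
    (v : ι → α) {m : ℕ} (hm : m ≤ Fintype.card ι) :
    ∃ X : Finset ι, #X = m ∧ ∀ j ∈ X, ∀ j' ∉ X, v j' ≤ v j := by
  classical
  induction m with
  | zero => exact ⟨∅, rfl, by simp⟩
  | succ m ih =>
    obtain ⟨X, hX, hXtop⟩ := ih (by omega)
    have hne : (univ \ X).Nonempty := by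
      rw [← card_pos, card_sdiff_of_subset (subset_univ _), card_univ]
      omega
    obtain ⟨j₀, hj₀, hmax⟩ := exists_max_image (univ \ X) v hne
    rw [mem_sdiff] at hj₀
    refine ⟨insert j₀ X, by rw [card_insert_of_notMem hj₀.2, hX], fun j hj j' hj' => ?_⟩
    rw [mem_insert, not_or] at hj'
    rcases mem_insert.1 hj with rfl | hj
    · exact hmax j' (mem_sdiff.2 ⟨mem_univ _, hj'.2⟩)
    · exact hXtop j hj j' hj'.2

theorem hammingDist_decide_mem_of_subset {ι : Type*} [Fintype ι] [DecidableEq ι]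
    {X Y : Finset ι} (h : X ⊆ Y) :
    hammingDist (fun j => decide (j ∈ X)) (fun j => decide (j ∈ Y)) = #Y - #X := by
  rw [← card_sdiff_of_subset h, hammingDist]
  congr 1
  ext j
  by_cases hX : j ∈ X
  · simp [hX, h hX]
  · simp [hX]

theorem hammingDist_not_right {ι : Type*} [Fintype ι] (x y : ι → Bool) :
    hammingDist x (fun j => !y j) = Fintype.card ι - hammingDist x y := by
  classical
  rw [hammingDist, hammingDist, ← card_compl, compl_filter]
  congr 1
  ext j
  cases x j <;> cases y j <;> simp

namespace Threshold

variable {ι : Type*} [Fintype ι]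

noncomputable def vec (v : ι → ℝ) (τ : ℝ) : ι → Bool := fun j => decide (τ < v j)

theorem exists_hammingDist_vec_le (v : ι → ℝ) {k : ℕ}
    (hmid : #{j | v j ∈ Set.Ioo (-1) 1} ≤ 2 * k) :
    ∃ x : ι → Bool, ∀ τ ∈ Set.Ico (-1 : ℝ) 1, hammingDist x (vec v τ) ≤ k := by
  classical
  set U : Finset ι := {j | 1 ≤ v j}
  set W : Finset ι := {j | -1 < v j}
  have hW : #W ≤ #U + 2 * k := by
    refine (card_le_card fun j hj => ?_).trans
      ((card_union_le U {j | v j ∈ Set.Ioo (-1) 1}).trans (by omega))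
    simp only [W, U, mem_filter, mem_univ, true_and, mem_union] at hj ⊢
    by_cases h : 1 ≤ v j
    exacts [Or.inl h, Or.inr ⟨hj, not_le.1 h⟩]
  -- every size between `#U` and `#W` is within `k` of `min (#U + k) #W`
  obtain ⟨X, hX, hXtop⟩ := exists_finset_card_eq_forall_notMem_le v
    ((min_le_right (#U + k) #W).trans (card_le_univ W))
  refine ⟨fun j => decide (j ∈ X), fun τ hτ => ?_⟩
  set Y : Finset ι := {j | τ < v j}
  have hvec : vec v τ = fun j => decide (j ∈ Y) := by
    funext j
    simp [vec, Y]
  have hUY : #U ≤ #Y := card_le_card fun j => by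
    simp only [U, Y, mem_filter, mem_univ, true_and]
    exact hτ.2.trans_le
  have hYW : #Y ≤ #W := card_le_card fun j => by
    simp only [W, Y, mem_filter, mem_univ, true_and]
    exact hτ.1.trans_lt
  -- `X` and `Y` are both upward closed for `v`, hence comparable
  have hchain : X ⊆ Y ∨ Y ⊆ X := by
    by_contra! h
    obtain ⟨j', hj'X, hj'Y⟩ := not_subset.1 h.1
    obtain ⟨j, hjY, hjX⟩ := not_subset.1 h.2
    have := hXtop j' hj'X j hjX
    simp only [Y, mem_filter, mem_univ, true_and] at hj'Y hjY
    linarith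
  rw [hvec]
  rcases hchain with h | h
  · rw [hammingDist_decide_mem_of_subset h]
    omega
  · rw [hammingDist_comm, hammingDist_decide_mem_of_subset h]
    omega

variable [Nonempty ι]

noncomputable def upper (y : ι → Bool) (v : ι → ℝ) : ℝ :=
  univ.inf' univ_nonempty fun j => if y j then min 1 (v j) else 1

-- Defined by reflection so that `weight_neg` holds by definition.
noncomputable def lower (y : ι → Bool) (v : ι → ℝ) : ℝ :=
  -upper (fun j => !y j) (-v)

-- The length of `{τ ∈ [-1, 1) | vec v τ = y}`, see `Ico_lower_upper`.
noncomputable def weight (y : ι → Bool) (v : ι → ℝ) : ℝ :=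
  max (upper y v - lower y v) 0

variable {y : ι → Bool} {v : ι → ℝ}

theorem lt_upper_iff {τ : ℝ} (hτ : τ < 1) : τ < upper y v ↔ ∀ j, y j → τ < v j := by
  simp only [upper, lt_inf'_iff, mem_univ, true_implies]
  refine forall_congr' fun j => ?_
  cases y j <;> simp [hτ]

theorem le_upper_iff {σ : ℝ} (hσ : σ ≤ 1) :
    σ ≤ upper y v ↔ ∀ j, y j → σ ≤ v j := by
  simp only [upper, le_inf'_iff, mem_univ, true_implies]
  refine forall_congr' fun j => ?_
  cases y j <;> simp [hσ]

theorem lower_le_iff {τ : ℝ} (hτ : -1 ≤ τ) :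
    lower y v ≤ τ ↔ ∀ j, y j = false → v j ≤ τ := by
  rw [lower, neg_le, le_upper_iff (by linarith)]
  simp

theorem upper_le_one : upper y v ≤ 1 := by
  obtain ⟨j⟩ := ‹Nonempty ι›
  refine (inf'_le _ (mem_univ j)).trans ?_
  split_ifs
  exacts [min_le_left _ _, le_rfl]

theorem neg_one_le_lower : -1 ≤ lower y v :=
  neg_le_neg upper_le_one

theorem mem_Ico_lower_upper_iff {τ : ℝ} (hτ : τ ∈ Set.Ico (-1) 1) :
    τ ∈ Set.Ico (lower y v) (upper y v) ↔ vec v τ = y := by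
  rw [Set.mem_Ico, lower_le_iff hτ.1, lt_upper_iff hτ.2, ← forall_and, funext_iff]
  refine forall_congr' fun j => ?_
  cases y j <;> simp [vec]

theorem Ico_lower_upper :
    Set.Ico (lower y v) (upper y v) = {τ ∈ Set.Ico (-1) 1 | vec v τ = y} := by
  ext τ
  refine ⟨fun hτ => ?_, fun hτ => (mem_Ico_lower_upper_iff hτ.1).2 hτ.2⟩
  have hτ' : τ ∈ Set.Ico (-1 : ℝ) 1 :=
    ⟨neg_one_le_lower.trans hτ.1, hτ.2.trans_le upper_le_one⟩
  exact ⟨hτ', (mem_Ico_lower_upper_iff hτ').1 hτ⟩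

theorem sum_weight [DecidableEq ι] (v : ι → ℝ) : ∑ y, weight y v = 2 := by
  have hunion : ⋃ y, Set.Ico (lower y v) (upper y v) = Set.Ico (-1) 1 := by
    simp only [Ico_lower_upper]
    ext τ
    simp
  have hdisj : Pairwise (Function.onFun Disjoint fun y => Set.Ico (lower y v) (upper y v)) := by
    intro y y' hne
    simp only [Function.onFun, Ico_lower_upper]
    exact Set.disjoint_left.2 fun τ h h' => hne (h.2.symm.trans h'.2)
  simp only [weight, ← Real.volume_real_Ico]
  rw [← measureReal_iUnion_fintype hdisj (fun _ => measurableSet_Ico)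
    (fun _ => measure_Ico_lt_top.ne), hunion, Real.volume_real_Ico]
  norm_num

theorem weight_neg : weight y (-v) = weight (fun j => !y j) v := by
  simp only [weight, lower, neg_neg, Bool.not_not]
  congr 1
  ring

theorem continuous_upper (y : ι → Bool) : Continuous (upper y) :=
  Continuous.finset_inf'_apply _ fun j _ => by cases y j <;> simp <;> fun_prop

theorem continuous_weight (y : ι → Bool) : Continuous (weight y) := by
  have := continuous_upper y
  have := continuous_upper fun j => !y j
  unfold weight lower
  fun_prop

theorem vec_lower_of_weight_pos (hw : 0 < weight y v) :
    lower y v ∈ Set.Ico (-1) 1 ∧ vec v (lower y v) = y := by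
  have : lower y v ∈ Set.Ico (lower y v) (upper y v) := ⟨le_rfl, by simpa [weight] using hw⟩
  rwa [Ico_lower_upper] at this

variable [DecidableEq ι]

noncomputable def crossPoint (v : ι → ℝ) : (ι → Bool) → ℝ :=
  ∑ y, (weight y v / 4) • (Pi.single y 1 - Pi.single (fun j => !y j) 1)

theorem crossPoint_neg (v : ι → ℝ) : crossPoint (-v) = -crossPoint v := by
  have hnot : Function.Involutive fun y : ι → Bool => fun j => !y j := fun y => by simp
  rw [crossPoint, crossPoint, ← sum_neg_distrib]
  refine Fintype.sum_bijective _ hnot.bijective _ _ fun y => ?_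
  simp only [weight_neg, Bool.not_not, smul_sub, neg_sub]

theorem continuous_crossPoint : Continuous (crossPoint (ι := ι)) :=
  continuous_finsetSum _ fun y _ => ((continuous_weight y).div_const 4).smul continuous_const

end Threshold

open Threshold in
theorem crossPoint_mem_ghdSimplex {n k : ℕ} [Nonempty (Fin n)] {v : Fin n → ℝ}
    {x : Fin n → Bool}
    (hx : ∀ τ ∈ Set.Ico (-1 : ℝ) 1, hammingDist x (vec v τ) ≤ k) :
    crossPoint v ∈ ghdSimplex n k x := by
  have hmid : ∀ y, 0 < weight y v →
      (2⁻¹ : ℝ) • Pi.single y 1 + (2⁻¹ : ℝ) • -Pi.single (fun j => !y j) 1 ∈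
        ghdSimplex n k x := by
    intro y hy
    obtain ⟨hτ, hy⟩ := vec_lower_of_weight_pos hy
    have hnear := hy ▸ hx _ hτ
    have hfar : n - k ≤ hammingDist x fun j => !y j := by
      rw [hammingDist_not_right, Fintype.card_fin]
      omega
    have hy_mem : Pi.single y (1 : ℝ) ∈ ghdSimplex n k x :=
      subset_convexHull ℝ _ (Or.inl ⟨y, hnear, rfl⟩)
    have hny_mem : -Pi.single (fun j => !y j) (1 : ℝ) ∈ ghdSimplex n k x :=
      subset_convexHull ℝ _ (Or.inr ⟨_, hfar, rfl⟩)
    exact convex_convexHull ℝ _ hy_mem hny_mem (by norm_num) (by norm_num) (by norm_num)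
  have hw : ∀ y, 0 ≤ weight y v := fun y => le_max_right _ _
  have hsum : crossPoint v = ∑ y with 0 < weight y v, (weight y v / 2) •
      ((2⁻¹ : ℝ) • Pi.single y 1 + (2⁻¹ : ℝ) • -Pi.single (fun j => !y j) 1) := by
    rw [sum_filter_of_ne fun y _ h => (hw y).lt_of_ne' fun h0 => h (by simp [h0]), crossPoint]
    refine sum_congr rfl fun y _ => ?_
    module
  rw [hsum]
  refine (convex_convexHull ℝ _).sum_mem (fun y _ => by linarith [hw y]) ?_
    fun y hy => hmid y (mem_filter.1 hy).2
  rw [sum_filter_of_ne fun y _ h => (hw y).lt_of_ne' fun h0 => h (by simp [h0]), ← sum_div,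
    sum_weight]
  norm_num

open Threshold in
theorem exists_odd_continuous_mem_ghdRealization {E : Type*} [TopologicalSpace E] [Neg E]
    {n k : ℕ} (hn : 0 < n) {K : Set E} (hK : IsCompact K) {a : Fin n → E → ℝ}
    (ha : ∀ j, Continuous (a j)) (ha_neg : ∀ j u, a j (-u) = -a j u)
    (hzero : ∀ u ∈ K, #{j | a j u = 0} ≤ 2 * k) :
    ∃ f : E → (Fin n → Bool) → ℝ,
      Continuous f ∧ (∀ u ∈ K, f u ∈ ghdRealization n k) ∧ ∀ u, f (-u) = -f u := by
  have : Nonempty (Fin n) := ⟨⟨0, hn⟩⟩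
  obtain ⟨δ, hδ, hband⟩ := hK.exists_pos_card_abs_lt_le ha hzero
  refine ⟨fun u => crossPoint fun j => a j u / δ, ?_, fun u hu => ?_, fun u => ?_⟩
  · exact continuous_crossPoint.comp (continuous_pi fun j => (ha j).div_const δ)
  · have hmid : #{j | a j u / δ ∈ Set.Ioo (-1) 1} ≤ 2 * k := by
      refine le_of_eq_of_le (congrArg card (filter_congr fun j _ => ?_)) (hband u hu)
      rw [Set.mem_Ioo, ← abs_lt, abs_div, abs_of_pos hδ, div_lt_one hδ]
    obtain ⟨x, hx⟩ := exists_hammingDist_vec_le _ hmid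
    exact Set.mem_iUnion.2 ⟨x, Or.inl (crossPoint_mem_ghdSimplex hx)⟩
  · simp only [ha_neg, neg_div]
    exact crossPoint_neg _

theorem ghd_coindex_strong_general (n k t : ℕ)
    (hn : 2 * k < n)
    (hkt : (t : ℝ) / 2 + 2 * Real.sqrt (t * Real.log t) < k) :
    ∃ f : EuclideanSpace ℝ (Fin (t + 1)) → ((Fin n → Bool) → ℝ),
      ContinuousOn f (Metric.sphere (0 : EuclideanSpace ℝ (Fin (t + 1))) 1) ∧
      (∀ x ∈ Metric.sphere (0 : EuclideanSpace ℝ (Fin (t + 1))) 1,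
        f x ∈ ghdRealization n k) ∧
      (∀ x ∈ Metric.sphere (0 : EuclideanSpace ℝ (Fin (t + 1))) 1,
        f (-x) = -f x) := by
  have htk : t ≤ 2 * k := by
    have : (t : ℝ) < 2 * k := by linarith [Real.sqrt_nonneg (t * Real.log t)]
    exact_mod_cast this.le
  let a : Fin n → EuclideanSpace ℝ (Fin (t + 1)) → ℝ :=
    fun j u => ∑ i, u i * ((j : ℕ) : ℝ) ^ (i : ℕ)
  have hzero : ∀ u ∈ Metric.sphere (0 : EuclideanSpace ℝ (Fin (t + 1))) 1,
      #{j | a j u = 0} ≤ 2 * k := fun u hu =>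
    (card_filter_sum_mul_pow_eq_zero_le (by simpa using ne_zero_of_mem_unit_sphere ⟨u, hu⟩)
      (Nat.cast_injective.comp Fin.val_injective)).trans htk
  obtain ⟨f, hf, hmem, hodd⟩ := exists_odd_continuous_mem_ghdRealization (by omega)
    (isCompact_sphere 0 1) (fun j => by fun_prop) (fun j u => by simp [a, sum_neg_distrib]) hzero
  exact ⟨f, hf.continuousOn, hmem, fun u _ => hodd u⟩

/-- Strong coindex bound for Gap Hamming Distance (explicit form): if
`k > t/2 + 2√(t log t)` then there is a ℤ₂-equivariant continuous map
`S^t → |S(GHD_k^n)|`, i.e. `coind_{ℤ₂}(S(GHD_k^n)) ≥ (1 - o_k(1))·2k`. -/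
theorem ghd_coindex_strong (n k t : ℕ) (hk : 5 ≤ k) (ht : 2 ≤ t)
    (hn : 2 * k < n)
    (hkt : (t : ℝ) / 2 + 2 * Real.sqrt (t * Real.log t) < k) :
    ∃ f : EuclideanSpace ℝ (Fin (t + 1)) → ((Fin n → Bool) → ℝ),
      ContinuousOn f (Metric.sphere (0 : EuclideanSpace ℝ (Fin (t + 1))) 1) ∧
      (∀ x ∈ Metric.sphere (0 : EuclideanSpace ℝ (Fin (t + 1))) 1,
        f x ∈ ghdRealization n k) ∧
      (∀ x ∈ Metric.sphere (0 : EuclideanSpace ℝ (Fin (t + 1))) 1,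
        f (-x) = -f x) :=
  ghd_coindex_strong_general n k t hn hkt
end
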